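/- arXiv:1911.03345 — 3 statements merged into one kernel-verified Lean document; each statement's English description precedes it below -/
import Mathlib

section
/- Let R be a ring, A an abelian category (e.g. Mod R), and X a class of objects containing 0. If X is special precovering (every object M admits an epimorphism f : G → M with G ∈ X and ker f ∈ X^⊥, where X^⊥ = {M : Ext¹(X,M) = 0 for all X ∈ X}), then the class Smd(X) of direct summands of objects of X satisfies ^⊥(Smd(X)^⊥) = Smd(X); that is, (Smd(X), Smd(X)^⊥) is a cotorsion pair. -/
/-!
STATEMENT 0: Let `A` be an abelian category (with enough injectives) and `X` a class of
objects containing `0`. If `X` is special precovering, then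
`^⊥(Smd(X)^⊥) = Smd(X)`; i.e. `(Smd(X), Smd(X)^⊥)` is a cotorsion pair.
-/

open CategoryTheory CategoryTheory.Limits CategoryTheory.Abelian ZeroObject

universe w v u

variable {A : Type u} [Category.{v} A] [Abelian A] [EnoughInjectives A] [HasExt.{w} A]

/-- The right Ext¹-orthogonal class of a class of objects. -/
def rightPerp (L : Set A) : Set A :=
  {M | ∀ X ∈ L, Subsingleton (Abelian.Ext X M 1)}

/-- The left Ext¹-orthogonal class of a class of objects. -/
def leftPerp (L : Set A) : Set A :=
  {M | ∀ X ∈ L, Subsingleton (Abelian.Ext M X 1)}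

/-- The class of direct summands of objects of `L` (up to isomorphism). -/
def Smd (L : Set A) : Set A :=
  {X | ∃ (Y Z : A), Z ∈ L ∧ Nonempty (Z ≅ X ⊞ Y)}

/-- `L` is special precovering: every object `M` admits an epimorphism `f : G ⟶ M`
with `G ∈ L` and `ker f ∈ L^⊥`. -/
def SpecialPrecovering (L : Set A) : Prop :=
  ∀ M : A, ∃ (G : A) (f : G ⟶ M), Epi f ∧ G ∈ L ∧ kernel f ∈ rightPerp L

/-!
Let `0 → K → G → M → 0` be a special `X`-precover of `M`. Ext¹ into `K` vanishes on `X`, hence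
on its direct summands, so `K ∈ Smd(X)^⊥`. If moreover `M ∈ ^⊥(Smd(X)^⊥)`, then `Ext¹(M, K) = 0`:
the extension class of the sequence vanishes, the sequence splits, and `M` is a direct summand
of `G ∈ X`.
-/

namespace CategoryTheory.Abelian.Ext

variable {C : Type u} [Category.{v} C] [Abelian C] [HasExt.{w} C]

lemma subsingleton_of_retract {N Z : C} (h : Retract N Z) (W : C) (n : ℕ)
    [Subsingleton (Ext Z W n)] : Subsingleton (Ext N W n) :=
  Function.Injective.subsingleton (f := fun x => (mk₀ h.r).comp x (zero_add n))
    (Function.LeftInverse.injective (g := fun y => (mk₀ h.i).comp y (zero_add n)) fun x => by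
      dsimp only
      rw [mk₀_comp_mk₀_assoc, h.retract, mk₀_id_comp])

end CategoryTheory.Abelian.Ext

namespace CategoryTheory.ShortComplex.ShortExact

variable {C : Type u} [Category.{v} C] [Abelian C] [HasExt.{w} C]

lemma nonempty_splitting_of_subsingleton_ext {S : ShortComplex C} (hS : S.ShortExact)
    [Subsingleton (Ext S.X₃ S.X₁ 1)] : Nonempty S.Splitting := by
  obtain ⟨x, hx⟩ := Ext.covariant_sequence_exact₃ S.X₃ hS (Ext.mk₀ (𝟙 S.X₃)) (zero_add 1)
    (Subsingleton.elim _ _)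
  obtain ⟨s, rfl⟩ := (Ext.mk₀_bijective _ _).2 x
  rw [Ext.mk₀_comp_mk₀] at hx
  exact ⟨.ofExactOfSection S hS.exact s ((Ext.mk₀_bijective _ _).1 hx) hS.mono_f⟩

end CategoryTheory.ShortComplex.ShortExact

section

variable {C : Type u} [Category.{v} C] [Abelian C] [HasExt.{w} C]

lemma nonempty_iso_biprod_kernel_of_subsingleton_ext {G M : C} (f : G ⟶ M) [Epi f]
    [Subsingleton (Ext M (kernel f) 1)] : Nonempty (G ≅ M ⊞ kernel f) := by
  have hS : (ShortComplex.mk (kernel.ι f) f (kernel.condition f)).ShortExact :=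
    { exact := ShortComplex.exact_kernel f }
  obtain ⟨s⟩ := hS.nonempty_splitting_of_subsingleton_ext
  exact ⟨s.isoBinaryBiproduct ≪≫ biprod.braiding _ _⟩

lemma subset_leftPerp_rightPerp (L : Set C) : L ⊆ leftPerp (rightPerp L) :=
  fun _ hM _ hN => hN _ hM

lemma rightPerp_subset_rightPerp_smd (L : Set C) : rightPerp L ⊆ rightPerp (Smd L) := by
  rintro W hW N ⟨Y, Z, hZ, ⟨e⟩⟩
  have := hW Z hZ
  exact Ext.subsingleton_of_retract
    ((BinaryBiproduct.bicone N Y).retract_left.trans (Retract.ofIso e.symm)) W 1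

end

theorem leftPerp_rightPerp_smd_general (X : Set A)
    (h : SpecialPrecovering X) :
    leftPerp (rightPerp (Smd X)) = Smd X := by
  refine subset_antisymm (fun M hM => ?_) (subset_leftPerp_rightPerp _)
  obtain ⟨G, f, hf, hG, hK⟩ := h M
  have := hM _ (rightPerp_subset_rightPerp_smd X hK)
  obtain ⟨e⟩ := nonempty_iso_biprod_kernel_of_subsingleton_ext f
  exact ⟨kernel f, G, hG, ⟨e⟩⟩

theorem leftPerp_rightPerp_smd (X : Set A) (h0 : (0 : A) ∈ X)
    (h : SpecialPrecovering X) :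
    leftPerp (rightPerp (Smd X)) = Smd X :=
  leftPerp_rightPerp_smd_general X h
end

section
/- Let A be an abelian category with enough projectives and enough injectives, and let (H, G) be a cotorsion pair in A (i.e. H^⊥ = G and ^⊥G = H). Then the following are equivalent: (1) Ext^i(X, Y) = 0 for all X ∈ H, Y ∈ G and all i > 0; (2) H is resolving (contains the projectives and is closed under extensions and kernels of epimorphisms between its objects); (3) G is coresolving (contains the injectives and is closed under extensions and cokernels of monomorphisms between its objects). -/
open CategoryTheory CategoryTheory.Limits CategoryTheory.Abelian

universe w v u

variable {A : Type u} [Category.{v} A] [Abelian A]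
  [EnoughProjectives A] [EnoughInjectives A] [HasExt.{w} A]

/-- `(H, G)` is a cotorsion pair: `H^⊥ = G` and `^⊥G = H`. -/
def IsCotorsionPair (H G : Set A) : Prop :=
  rightPerp H = G ∧ leftPerp G = H

/-- `L` is resolving: it contains all projectives, and for every short exact sequence
`0 → X₁ → X₂ → X₃ → 0` with `X₃ ∈ L`, one has `X₁ ∈ L ↔ X₂ ∈ L`. -/
def Resolving (L : Set A) : Prop :=
  (∀ P : A, Projective P → P ∈ L) ∧
  (∀ S : ShortComplex A, S.ShortExact → S.X₃ ∈ L → (S.X₁ ∈ L ↔ S.X₂ ∈ L))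

/-- `L` is coresolving: it contains all injectives, and for every short exact sequence
`0 → X₁ → X₂ → X₃ → 0` with `X₁ ∈ L`, one has `X₃ ∈ L ↔ X₂ ∈ L`. -/
def Coresolving (L : Set A) : Prop :=
  (∀ I : A, Injective I → I ∈ L) ∧
  (∀ S : ShortComplex A, S.ShortExact → S.X₁ ∈ L → (S.X₃ ∈ L ↔ S.X₂ ∈ L))

/-!
Everything comes from the two long exact `Ext` sequences of a short exact sequence.
A left orthogonal class `⊥G` always contains the projectives and is closed under extensions;
it is closed under kernels of epimorphisms as soon as `Ext²(⊥G, G) = 0`, since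
`Ext¹(X₂, Y) → Ext¹(X₁, Y) → Ext²(X₃, Y)` is exact. Conversely, if `H` is resolving, a
presentation `0 → K → P → X → 0` with `P` projective has `K ∈ H`, and
`Ext^(n+1)(K, Y) ↠ Ext^(n+2)(X, Y)`, so the vanishing of `Ext¹(H, G)` propagates to all
higher degrees. The coresolving side is dual, with injective copresentations.
-/

section

variable {C : Type*} [Category C] [Abelian C] [HasExt.{w} C]

namespace CategoryTheory.ShortComplex.ShortExact

variable {S : ShortComplex C} (hS : S.ShortExact)
include hS

lemma subsingleton_ext_X₂_left (Y : C) {n : ℕ} (h₁ : Subsingleton (Ext S.X₁ Y n))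
    (h₃ : Subsingleton (Ext S.X₃ Y n)) : Subsingleton (Ext S.X₂ Y n) := by
  refine subsingleton_of_forall_eq 0 fun x => ?_
  obtain ⟨x₃, rfl⟩ := Ext.contravariant_sequence_exact₂ hS Y x (Subsingleton.elim _ _)
  rw [Subsingleton.elim x₃ 0, Ext.comp_zero]

lemma subsingleton_ext_X₁_left (Y : C) {n : ℕ} (h₂ : Subsingleton (Ext S.X₂ Y n))
    (h₃ : Subsingleton (Ext S.X₃ Y (n + 1))) : Subsingleton (Ext S.X₁ Y n) := by
  refine subsingleton_of_forall_eq 0 fun x => ?_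
  obtain ⟨x₂, rfl⟩ :=
    Ext.contravariant_sequence_exact₁ hS Y x (add_comm 1 n) (Subsingleton.elim _ _)
  rw [Subsingleton.elim x₂ 0, Ext.comp_zero]

lemma subsingleton_ext_X₃_left (Y : C) {n : ℕ} (h₁ : Subsingleton (Ext S.X₁ Y n))
    (h₂ : Subsingleton (Ext S.X₂ Y (n + 1))) : Subsingleton (Ext S.X₃ Y (n + 1)) := by
  refine subsingleton_of_forall_eq 0 fun x => ?_
  obtain ⟨x₁, rfl⟩ :=
    Ext.contravariant_sequence_exact₃ hS Y x (Subsingleton.elim _ _) (add_comm 1 n)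
  rw [Subsingleton.elim x₁ 0, Ext.comp_zero]

lemma subsingleton_ext_X₂_right (X : C) {n : ℕ} (h₁ : Subsingleton (Ext X S.X₁ n))
    (h₃ : Subsingleton (Ext X S.X₃ n)) : Subsingleton (Ext X S.X₂ n) := by
  refine subsingleton_of_forall_eq 0 fun x => ?_
  obtain ⟨x₁, rfl⟩ := Ext.covariant_sequence_exact₂ X hS x (Subsingleton.elim _ _)
  rw [Subsingleton.elim x₁ 0, Ext.zero_comp]

lemma subsingleton_ext_X₃_right (X : C) {n : ℕ} (h₁ : Subsingleton (Ext X S.X₁ (n + 1)))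
    (h₂ : Subsingleton (Ext X S.X₂ n)) : Subsingleton (Ext X S.X₃ n) := by
  refine subsingleton_of_forall_eq 0 fun x => ?_
  obtain ⟨x₂, rfl⟩ := Ext.covariant_sequence_exact₃ X hS x rfl (Subsingleton.elim _ _)
  rw [Subsingleton.elim x₂ 0, Ext.zero_comp]

lemma subsingleton_ext_X₁_right (X : C) {n : ℕ} (h₂ : Subsingleton (Ext X S.X₂ (n + 1)))
    (h₃ : Subsingleton (Ext X S.X₃ n)) : Subsingleton (Ext X S.X₁ (n + 1)) := by
  refine subsingleton_of_forall_eq 0 fun x => ?_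
  obtain ⟨x₃, rfl⟩ := Ext.covariant_sequence_exact₁ X hS x (Subsingleton.elim _ _) rfl
  rw [Subsingleton.elim x₃ 0, Ext.zero_comp]

lemma X₂_mem_leftPerp {L : Set C} (h₁ : S.X₁ ∈ leftPerp L) (h₃ : S.X₃ ∈ leftPerp L) :
    S.X₂ ∈ leftPerp L :=
  fun Y hY => hS.subsingleton_ext_X₂_left Y (h₁ Y hY) (h₃ Y hY)

lemma X₂_mem_rightPerp {L : Set C} (h₁ : S.X₁ ∈ rightPerp L) (h₃ : S.X₃ ∈ rightPerp L) :
    S.X₂ ∈ rightPerp L :=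
  fun X hX => hS.subsingleton_ext_X₂_right X (h₁ X hX) (h₃ X hX)

end CategoryTheory.ShortComplex.ShortExact

lemma projective_mem_leftPerp (L : Set C) (P : C) [Projective P] : P ∈ leftPerp L :=
  fun Y _ => Ext.subsingleton_of_projective P Y 0

lemma injective_mem_rightPerp (L : Set C) (I : C) [Injective I] : I ∈ rightPerp L :=
  fun X _ => Ext.subsingleton_of_injective X I 0

lemma resolving_leftPerp (L : Set C)
    (hL : ∀ X ∈ leftPerp L, ∀ Y ∈ L, Subsingleton (Ext X Y 2)) :
    Resolving (leftPerp L) :=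
  ⟨fun P _ => projective_mem_leftPerp L P, fun _ hS h₃ =>
    ⟨fun h₁ => hS.X₂_mem_leftPerp h₁ h₃,
      fun h₂ Y hY => hS.subsingleton_ext_X₁_left Y (h₂ Y hY) (hL _ h₃ Y hY)⟩⟩

lemma coresolving_rightPerp (L : Set C)
    (hL : ∀ X ∈ L, ∀ Y ∈ rightPerp L, Subsingleton (Ext X Y 2)) :
    Coresolving (rightPerp L) :=
  ⟨fun I _ => injective_mem_rightPerp L I, fun _ hS h₁ =>
    ⟨fun h₃ => hS.X₂_mem_rightPerp h₁ h₃,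
      fun h₂ X hX => hS.subsingleton_ext_X₃_right X (hL X hX _ h₁) (h₂ X hX)⟩⟩

lemma Resolving.subsingleton_ext_succ [EnoughProjectives C] {L : Set C} (hL : Resolving L)
    {Y : C} (hY : ∀ X ∈ L, Subsingleton (Ext X Y 1)) (n : ℕ) :
    ∀ X ∈ L, Subsingleton (Ext X Y (n + 1)) := by
  induction n with
  | zero => exact hY
  | succ n ih =>
    intro X hX
    let S := ShortComplex.mk _ _ (kernel.condition (Projective.π X))
    have hS : S.ShortExact := { exact := S.exact_of_f_is_kernel (kernelIsKernel S.g) }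
    have hK : S.X₁ ∈ L := (hL.2 S hS hX).2 (hL.1 _ inferInstance)
    exact hS.subsingleton_ext_X₃_left Y (ih _ hK) (Ext.subsingleton_of_projective _ Y _)

lemma Coresolving.subsingleton_ext_succ [EnoughInjectives C] {L : Set C} (hL : Coresolving L)
    {X : C} (hX : ∀ Y ∈ L, Subsingleton (Ext X Y 1)) (n : ℕ) :
    ∀ Y ∈ L, Subsingleton (Ext X Y (n + 1)) := by
  induction n with
  | zero => exact hX
  | succ n ih =>
    intro Y hY
    let S := ShortComplex.mk _ _ (cokernel.condition (Injective.ι Y))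
    have hS : S.ShortExact := { exact := S.exact_of_g_is_cokernel (cokernelIsCokernel S.f) }
    have hC : S.X₃ ∈ L := (hL.2 S hS hY).2 (hL.1 _ inferInstance)
    exact hS.subsingleton_ext_X₁_right X (Ext.subsingleton_of_injective X _ _) (ih _ hC)

end

theorem hereditary_tfae (H G : Set A) (hpair : IsCotorsionPair H G) :
    ((∀ X ∈ H, ∀ Y ∈ G, ∀ i : ℕ, 0 < i → Subsingleton (Abelian.Ext X Y i)) ↔
      Resolving H) ∧
    ((∀ X ∈ H, ∀ Y ∈ G, ∀ i : ℕ, 0 < i → Subsingleton (Abelian.Ext X Y i)) ↔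
      Coresolving G) := by
  obtain ⟨hG, hH⟩ := hpair
  have ext_one (X : A) (hX : X ∈ H) (Y : A) (hY : Y ∈ G) : Subsingleton (Ext X Y 1) :=
    (hG ▸ hY : Y ∈ rightPerp H) X hX
  refine ⟨⟨fun h => ?_, fun hres X hX Y hY i hi => ?_⟩,
    ⟨fun h => ?_, fun hcores X hX Y hY i hi => ?_⟩⟩
  · exact hH ▸ resolving_leftPerp G fun X hX Y hY => h X (hH ▸ hX) Y hY 2 two_pos
  · obtain ⟨n, rfl⟩ := Nat.exists_eq_add_one_of_ne_zero hi.ne'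
    exact hres.subsingleton_ext_succ (fun X hX => ext_one X hX Y hY) n X hX
  · exact hG ▸ coresolving_rightPerp H fun X hX Y hY => h X hX Y (hG ▸ hY) 2 two_pos
  · obtain ⟨n, rfl⟩ := Nat.exists_eq_add_one_of_ne_zero hi.ne'
    exact hcores.subsingleton_ext_succ (ext_one X hX) n Y hY
end

section
/- Let A and B be abelian categories with enough projective and enough injective objects, and let T : B → A be an exact functor. Consider the comma category (T↓A) and the full subcategory E = ⟨p(A,B)⟩ of objects (A,B,φ) with φ : T(B) → A a monomorphism, with the exact structure inherited from (T↓A). Then E is a Frobenius exact category if and only if A and B are Frobenius abelian categories and T sends projective objects of B to projective objects of A. -/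
/-!
STATEMENT 19: Let `A` and `B` be abelian categories with enough projectives and enough
injectives, and let `T : B ⥤ A` be an exact functor.  In the comma category `(T ↓ A)`,
consider the full subcategory `E = ⟨p(A, B)⟩` of objects `(A, B, φ)` with
`φ : T(B) → A` a monomorphism, with the exact structure inherited from `(T ↓ A)`
(componentwise short exact sequences all of whose terms lie in `E`).  Then `E` is a
Frobenius exact category if and only if `A` and `B` are Frobenius abelian categories
and `T` preserves projective objects.
-/

open CategoryTheory CategoryTheory.Limits

universe v u v' u'

variable {A : Type u} [Category.{v} A] [Abelian A]
  {B : Type u'} [Category.{v'} B] [Abelian B]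
  (T : B ⥤ A)

namespace CommaFrobenius

/-- The subcategory `⟨p(A, B)⟩` of the comma category `(T ↓ A)`: objects whose structure
map is a monomorphism. -/
def E : Set (Comma T (𝟭 A)) := {X | Mono X.hom}

/-- A pair of composable morphisms in the comma category is a (componentwise) short exact
sequence. -/
def IsSES {X Y Z : Comma T (𝟭 A)} (f : X ⟶ Y) (g : Y ⟶ Z) : Prop :=
  (∃ w : f.left ≫ g.left = 0, (ShortComplex.mk f.left g.left w).ShortExact) ∧
  (∃ w : f.right ≫ g.right = 0, (ShortComplex.mk f.right g.right w).ShortExact)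

/-- An object of `E` is projective relative to the exact structure of `E` if every
admissible epimorphism of `E` onto it splits through any morphism. -/
def ProjectiveInE (P : Comma T (𝟭 A)) : Prop :=
  P ∈ E T ∧ ∀ (X Y Z : Comma T (𝟭 A)) (f : X ⟶ Y) (g : Y ⟶ Z),
    X ∈ E T → Y ∈ E T → Z ∈ E T → IsSES T f g →
      ∀ h : P ⟶ Z, ∃ k : P ⟶ Y, k ≫ g = h

/-- An object of `E` is injective relative to the exact structure of `E`. -/
def InjectiveInE (I : Comma T (𝟭 A)) : Prop :=
  I ∈ E T ∧ ∀ (X Y Z : Comma T (𝟭 A)) (f : X ⟶ Y) (g : Y ⟶ Z),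
    X ∈ E T → Y ∈ E T → Z ∈ E T → IsSES T f g →
      ∀ h : X ⟶ I, ∃ k : Y ⟶ I, f ≫ k = h

/-- The exact category `E` has enough projectives. -/
def EnoughProjectivesInE : Prop :=
  ∀ Z ∈ E T, ∃ (X Y : Comma T (𝟭 A)) (f : X ⟶ Y) (g : Y ⟶ Z),
    X ∈ E T ∧ Y ∈ E T ∧ IsSES T f g ∧ ProjectiveInE T Y

/-- The exact category `E` has enough injectives. -/
def EnoughInjectivesInE : Prop :=
  ∀ X ∈ E T, ∃ (Y Z : Comma T (𝟭 A)) (f : X ⟶ Y) (g : Y ⟶ Z),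
    Y ∈ E T ∧ Z ∈ E T ∧ IsSES T f g ∧ InjectiveInE T Y

/-- `E` is a Frobenius exact category. -/
def FrobeniusE : Prop :=
  EnoughProjectivesInE T ∧ EnoughInjectivesInE T ∧
    ∀ P : Comma T (𝟭 A), ProjectiveInE T P ↔ InjectiveInE T P

end CommaFrobenius

/-! An object `φ : T X ⟶ Y` of `E` is projective in `E` iff `X` and `coker φ` are projective,
and injective in `E` iff `X` and `Y` are injective. For the "if" directions, a projective
`coker φ` splits `φ`, which lets componentwise lifts be corrected into a morphism of `E`;
dually, exactness of `T` pushes the defect of a componentwise extension into the injective `Y`.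
The "only if" directions test against the objects `0 ⟶ R` and `𝟙 : T Q ⟶ T Q` and against a
pushout along `φ`. The theorem then follows because `0 ⟶ T X ⟶ Y ⟶ coker φ ⟶ 0` is short
exact, and splits as soon as `coker φ` is projective or `T X` is injective. -/

set_option linter.unusedSectionVars false

open ZeroObject

namespace CategoryTheory

lemma IsPullback.comp_mono {C : Type*} [Category C] {X₁ X₂ X₃ X₄ X₅ : C} {t : X₁ ⟶ X₂}
    {l : X₁ ⟶ X₃} {r : X₂ ⟶ X₄} {b : X₃ ⟶ X₄} (h : IsPullback t l r b) (q : X₄ ⟶ X₅) [Mono q] :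
    IsPullback t l (r ≫ q) (b ≫ q) := by
  simpa using h.paste_horiz (.of_horiz_isIso_mono ⟨by simp⟩ : IsPullback (𝟙 X₂) r (r ≫ q) q)

section Abelian

variable {C : Type*} [Category C] [Abelian C]

lemma kernel_shortExact {X Y : C} (g : X ⟶ Y) [Epi g] :
    (ShortComplex.mk (kernel.ι g) g (kernel.condition g)).ShortExact where
  exact := ShortComplex.exact_of_f_is_kernel _ (kernelIsKernel g)

lemma cokernel_shortExact {X Y : C} (f : X ⟶ Y) [Mono f] :
    (ShortComplex.mk f (cokernel.π f) (cokernel.condition f)).ShortExact where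
  exact := ShortComplex.exact_of_g_is_cokernel _ (cokernelIsCokernel f)

lemma ShortComplex.ShortExact.projective_X₂ {S : ShortComplex C} (hS : S.ShortExact)
    [Projective S.X₁] [Projective S.X₃] : Projective S.X₂ :=
  Projective.of_iso hS.splittingOfProjective.isoBinaryBiproduct.symm inferInstance

lemma ShortComplex.ShortExact.projective_X₃_of_injective_X₁ {S : ShortComplex C} (hS : S.ShortExact)
    [Injective S.X₁] [Projective S.X₂] : Projective S.X₃ :=
  Retract.projective ⟨hS.splittingOfInjective.s, S.g, hS.splittingOfInjective.s_g⟩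

lemma IsPushout.isPullback_of_mono_left {X₁ X₂ X₃ X₄ : C} {t : X₁ ⟶ X₂} {l : X₁ ⟶ X₃}
    {r : X₂ ⟶ X₄} {b : X₃ ⟶ X₄} (h : IsPushout t l r b) [Mono t] : IsPullback t l r b := by
  have hS : (ShortComplex.mk (biprod.lift t (-l)) (biprod.desc r b) (by simp [h.w])).Exact :=
    h.exact_shortComplex
  have : Mono (biprod.lift t (-l)) := mono_of_mono_fac (biprod.lift_fst t (-l))
  have hlift (s : PullbackCone r b) : biprod.lift s.fst (-s.snd) ≫ biprod.desc r b = 0 := by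
    simp [s.condition]
  have hfac (s : PullbackCone r b) :
      hS.lift _ (hlift s) ≫ biprod.lift t (-l) = biprod.lift s.fst (-s.snd) :=
    hS.lift_f _ (hlift s)
  have hfst (s : PullbackCone r b) : hS.lift _ (hlift s) ≫ t = s.fst := by
    simpa using hfac s =≫ biprod.fst
  refine .of_isLimit' h.toCommSq (PullbackCone.IsLimit.mk _ (fun s => hS.lift _ (hlift s)) hfst
    (fun s => by simpa using hfac s =≫ biprod.snd)
    (fun s m hm _ => (cancel_mono t).1 (hm.trans (hfst s).symm)))

end Abelian

end CategoryTheory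

namespace CommaFrobenius

noncomputable abbrev ofRight (R : A) : Comma T (𝟭 A) := ⟨0, R, 0⟩

noncomputable abbrev ofRightMap {R R' : A} (r : R ⟶ R') : ofRight T R ⟶ ofRight T R' :=
  ⟨𝟙 0, r, by simp⟩

lemma ofRight_mem [T.PreservesZeroMorphisms] (R : A) : ofRight T R ∈ E T :=
  (T.map_isZero (isZero_zero B)).mono _

abbrev ofLeft (Q : B) : Comma T (𝟭 A) := ⟨Q, T.obj Q, 𝟙 _⟩

abbrev ofLeftMap {Q Q' : B} (q : Q ⟶ Q') : ofLeft T Q ⟶ ofLeft T Q' := ⟨q, T.map q, by simp⟩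

lemma ofLeft_mem (Q : B) : ofLeft T Q ∈ E T := inferInstanceAs (Mono (𝟙 _))

section Kernel

variable [PreservesFiniteLimits T]

noncomputable def kernelComma {Y Z : Comma T (𝟭 A)} (g : Y ⟶ Z) : Comma T (𝟭 A) where
  left := kernel g.left
  right := kernel g.right
  hom := (PreservesKernel.iso T g.left).hom ≫ kernel.map (T.map g.left) g.right Y.hom Z.hom g.w

noncomputable def kernelCommaι {Y Z : Comma T (𝟭 A)} (g : Y ⟶ Z) : kernelComma T g ⟶ Y where
  left := kernel.ι g.left
  right := kernel.ι g.right
  w := by simp [kernelComma]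

lemma kernelComma_mem {Y Z : Comma T (𝟭 A)} (g : Y ⟶ Z) (hY : Y ∈ E T) :
    kernelComma T g ∈ E T := by
  have : Mono Y.hom := hY
  have : Mono (kernel.map _ _ Y.hom Z.hom g.w) := mono_of_mono_fac (kernel.lift_ι _ _ _)
  exact mono_comp (PreservesKernel.iso T g.left).hom (kernel.map _ _ Y.hom Z.hom g.w)

lemma isSES_kernelCommaι {Y Z : Comma T (𝟭 A)} (g : Y ⟶ Z) [Epi g.left] [Epi g.right] :
    IsSES T (kernelCommaι T g) g :=
  ⟨⟨_, kernel_shortExact g.left⟩, ⟨_, kernel_shortExact g.right⟩⟩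

end Kernel

section Cokernel

variable [PreservesFiniteColimits T]

noncomputable def cokernelComma {X Y : Comma T (𝟭 A)} (f : X ⟶ Y) : Comma T (𝟭 A) where
  left := cokernel f.left
  right := cokernel f.right
  hom := (PreservesCokernel.iso T f.left).hom ≫ cokernel.map (T.map f.left) f.right X.hom Y.hom f.w

noncomputable def cokernelCommaπ {X Y : Comma T (𝟭 A)} (f : X ⟶ Y) : Y ⟶ cokernelComma T f where
  left := cokernel.π f.left
  right := cokernel.π f.right
  w := by simp [cokernelComma, PreservesCokernel.π_iso_hom_assoc]

lemma cokernelComma_mem {X Y : Comma T (𝟭 A)} (f : X ⟶ Y)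
    (sq : IsPullback (T.map f.left) X.hom Y.hom f.right) : cokernelComma T f ∈ E T := by
  have := Abelian.mono_cokernel_map_of_isPullback sq
  exact mono_comp (PreservesCokernel.iso T f.left).hom (cokernel.map _ _ _ _ sq.w)

lemma isSES_cokernelCommaπ {X Y : Comma T (𝟭 A)} (f : X ⟶ Y) [Mono f.left] [Mono f.right] :
    IsSES T f (cokernelCommaπ T f) :=
  ⟨⟨_, cokernel_shortExact f.left⟩, ⟨_, cokernel_shortExact f.right⟩⟩

end Cokernel

variable {T} {M : Comma T (𝟭 A)}

theorem exists_lift_of_projective {Y Z : Comma T (𝟭 A)} (hM : M ∈ E T) [Projective M.left]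
    [Projective (cokernel M.hom)] (g : Y ⟶ Z) [Epi g.left] [Epi g.right] (h : M ⟶ Z) :
    ∃ k : M ⟶ Y, k ≫ g = h := by
  have : Mono M.hom := hM
  obtain ⟨r, s, hr, hrs⟩ : ∃ (r : (𝟭 A).obj M.right ⟶ T.obj M.left)
      (s : cokernel M.hom ⟶ (𝟭 A).obj M.right),
      M.hom ≫ r = 𝟙 _ ∧ r ≫ M.hom + cokernel.π M.hom ≫ s = 𝟙 _ :=
    let σ := (cokernel_shortExact M.hom).splittingOfProjective
    ⟨σ.r, σ.s, σ.f_r, σ.id⟩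
  obtain ⟨kl, hkl⟩ : ∃ kl, kl ≫ g.left = h.left := ⟨Projective.factorThru h.left g.left, by simp⟩
  obtain ⟨b, hb⟩ : ∃ b : cokernel M.hom ⟶ (𝟭 A).obj Y.right, b ≫ g.right = s ≫ h.right :=
    ⟨Projective.factorThru (s ≫ h.right) g.right, by simp⟩
  let kr : (𝟭 A).obj M.right ⟶ (𝟭 A).obj Y.right := r ≫ T.map kl ≫ Y.hom + cokernel.π M.hom ≫ b
  have hkr : kr ≫ g.right = h.right := by
    have hg : Y.hom ≫ g.right = T.map g.left ≫ Z.hom := g.w.symm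
    have hkl' : T.map kl ≫ T.map g.left ≫ Z.hom = M.hom ≫ h.right := by
      rw [← T.map_comp_assoc, hkl]; exact h.w
    simp only [kr, Preadditive.add_comp, Category.assoc, hg, hkl', hb]
    rw [← Category.assoc, ← Category.assoc, ← Preadditive.add_comp, hrs, Category.id_comp]
  refine ⟨⟨kl, kr, ?_⟩, ?_⟩
  · simp [kr, reassoc_of% hr]
  · ext
    · exact hkl
    · exact hkr

theorem projectiveInE_of_projective (hM : M ∈ E T) [Projective M.left]
    [Projective (cokernel M.hom)] : ProjectiveInE T M := by
  refine ⟨hM, fun _ _ _ _ g _ _ _ hfg h => ?_⟩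
  obtain ⟨⟨_, hl⟩, ⟨_, hr⟩⟩ := hfg
  have := hl.epi_g
  have := hr.epi_g
  exact exists_lift_of_projective hM g h

section Kernel

variable [PreservesFiniteLimits T]

theorem ProjectiveInE.exists_lift (hM : ProjectiveInE T M) {Y Z : Comma T (𝟭 A)} (g : Y ⟶ Z)
    [Epi g.left] [Epi g.right] (hY : Y ∈ E T) (hZ : Z ∈ E T) (h : M ⟶ Z) :
    ∃ k : M ⟶ Y, k ≫ g = h :=
  hM.2 _ _ _ _ g (kernelComma_mem T g hY) hY hZ (isSES_kernelCommaι T g) h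

theorem ProjectiveInE.projective_cokernel (hM : ProjectiveInE T M) :
    Projective (cokernel M.hom) := by
  refine ⟨fun {V W} u e _ => ?_⟩
  obtain ⟨k, hk⟩ := hM.exists_lift (ofRightMap T e) (ofRight_mem T V) (ofRight_mem T W)
    ⟨0, cokernel.π M.hom ≫ u, by simp⟩
  have hk₀ : M.hom ≫ k.right = 0 := by simpa using k.w.symm
  refine ⟨cokernel.desc _ k.right hk₀, ?_⟩
  rw [← cancel_epi (cokernel.π M.hom), cokernel.π_desc_assoc]
  exact congrArg CommaMorphism.right hk

theorem projectiveInE_ofRight_iff (R : A) : ProjectiveInE T (ofRight T R) ↔ Projective R := by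
  have e : cokernel (ofRight T R).hom ≅ R := cokernelZeroIsoTarget
  refine ⟨fun h => Projective.of_iso e h.projective_cokernel, fun h => ?_⟩
  have := Projective.of_iso e.symm h
  exact projectiveInE_of_projective (ofRight_mem T R)

theorem enoughProjectivesInE [EnoughProjectives A] [EnoughProjectives B] :
    EnoughProjectivesInE T := by
  intro Z hZ
  have : Mono Z.hom := hZ
  let Y : Comma T (𝟭 A) := ⟨Projective.over Z.left,
    T.obj (Projective.over Z.left) ⊞ Projective.over Z.right, biprod.inl⟩
  let g : Y ⟶ Z := ⟨Projective.π _,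
    biprod.desc (T.map (Projective.π _) ≫ Z.hom) (Projective.π _), by simp [Y]⟩
  have : Epi g.right := epi_of_epi_fac (biprod.inr_desc _ _)
  have hY : Y ∈ E T := inferInstanceAs (Mono biprod.inl)
  have : Projective (cokernel Y.hom) := Projective.of_iso
    ((cokernelIsCokernel _).coconePointUniqueUpToIso (biprod.isCokernelInlCokernelFork _ _)).symm
    (inferInstanceAs (Projective (Projective.over Z.right)))
  exact ⟨_, Y, kernelCommaι T g, g, kernelComma_mem T g hY, hY, isSES_kernelCommaι T g,
    projectiveInE_of_projective hY⟩

end Kernel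

section Cokernel

variable [PreservesFiniteColimits T]

theorem InjectiveInE.exists_extend (hM : InjectiveInE T M) {X Y : Comma T (𝟭 A)} (f : X ⟶ Y)
    [Mono f.left] [Mono f.right] (hY : Y ∈ E T)
    (sq : IsPullback (T.map f.left) X.hom Y.hom f.right) (h : X ⟶ M) :
    ∃ k : Y ⟶ M, f ≫ k = h :=
  have : Mono Y.hom := hY
  hM.2 _ _ _ f _ sq.mono_snd_of_mono hY (cokernelComma_mem T f sq) (isSES_cokernelCommaπ T f) h

theorem InjectiveInE.injective_right (hM : InjectiveInE T M) : Injective M.right := by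
  refine ⟨fun {U V} u f _ => ?_⟩
  obtain ⟨k, hk⟩ := hM.exists_extend (ofRightMap T f) (ofRight_mem T V)
    (.of_horiz_isIso_mono ⟨by simp⟩) ⟨0, u, by simp⟩
  exact ⟨k.right, congrArg CommaMorphism.right hk⟩

end Cokernel

variable [PreservesFiniteLimits T] [PreservesFiniteColimits T]

theorem exists_extend_of_injective {X Y Z : Comma T (𝟭 A)} [Injective M.left] [Injective M.right]
    (f : X ⟶ Y) (g : Y ⟶ Z) (hfg : IsSES T f g) (hZ : Z ∈ E T) (h : X ⟶ M) :
    ∃ k : Y ⟶ M, f ≫ k = h := by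
  obtain ⟨⟨_, hl⟩, ⟨hfgr, hr⟩⟩ := hfg
  have := hl.mono_f
  have := hr.mono_f
  have : Mono Z.hom := hZ
  obtain ⟨kl, hkl⟩ : ∃ kl, f.left ≫ kl = h.left := ⟨Injective.factorThru h.left f.left, by simp⟩
  obtain ⟨k₀, hk₀⟩ : ∃ k₀ : Y.right ⟶ (𝟭 A).obj M.right, f.right ≫ k₀ = h.right :=
    ⟨Injective.factorThru h.right f.right, by simp⟩
  -- `(kl, k₀)` fails to be a morphism by `e`, which vanishes on `T X.left`, so it factors
  -- through `T Z.left` and then extends along the monomorphism `Z.hom`.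
  let e : T.obj Y.left ⟶ (𝟭 A).obj M.right := Y.hom ≫ k₀ - T.map kl ≫ M.hom
  have he : T.map f.left ≫ e = 0 := by
    have hf : T.map f.left ≫ Y.hom = X.hom ≫ f.right := f.w
    have hh : T.map h.left ≫ M.hom = X.hom ≫ h.right := h.w
    simp only [e, Preadditive.comp_sub, reassoc_of% hf, hk₀, ← T.map_comp_assoc, hkl, hh,
      sub_self]
  have hlT := hl.map_of_exact T
  have := hlT.epi_g
  obtain ⟨ē, hē⟩ : ∃ ē : T.obj Z.left ⟶ (𝟭 A).obj M.right, T.map g.left ≫ ē = e :=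
    ⟨hlT.exact.desc e he, hlT.exact.g_desc e he⟩
  obtain ⟨w, hw⟩ : ∃ w : Z.right ⟶ (𝟭 A).obj M.right, Z.hom ≫ w = ē :=
    ⟨Injective.factorThru ē Z.hom, Injective.comp_factorThru _ _⟩
  refine ⟨⟨kl, k₀ - g.right ≫ w, ?_⟩, ?_⟩
  · have hg : Y.hom ≫ g.right = T.map g.left ≫ Z.hom := g.w.symm
    dsimp only [Functor.id_map]
    rw [Preadditive.comp_sub, reassoc_of% hg, hw, hē]
    simp [e]
  · ext
    · exact hkl
    · simp [hk₀, reassoc_of% hfgr]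

theorem injectiveInE_of_injective (hM : M ∈ E T) [Injective M.left]
    [Injective M.right] : InjectiveInE T M :=
  ⟨hM, fun _ _ _ f g _ _ hZ hfg h => exists_extend_of_injective f g hfg hZ h⟩

theorem ProjectiveInE.projective_left (hM : ProjectiveInE T M) : Projective M.left := by
  have : Mono M.hom := hM.1
  refine ⟨fun {V W} u e _ => ?_⟩
  -- lifting `(u, pushout.inl) : M ⟶ Z` along `g` lifts `u` along `e`
  let Y : Comma T (𝟭 A) := ⟨V, M.right ⊞ T.obj V, biprod.inr⟩
  let Z : Comma T (𝟭 A) := ⟨W, pushout M.hom (T.map u), pushout.inr M.hom (T.map u)⟩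
  let g : Y ⟶ Z :=
    ⟨e, biprod.desc (pushout.inl _ _) (T.map e ≫ pushout.inr _ _), by simp [Y, Z]⟩
  have : Epi g.right := Preadditive.epi_of_cancel_zero _ fun x hx => by
    apply pushout.hom_ext
    · simpa [g] using biprod.inl ≫= hx
    · simpa [g, ← cancel_epi (T.map e)] using biprod.inr ≫= hx
  obtain ⟨k, hk⟩ := hM.exists_lift g (inferInstanceAs (Mono biprod.inr))
    (inferInstanceAs (Mono (pushout.inr _ _))) ⟨u, pushout.inl _ _, pushout.condition.symm⟩
  exact ⟨k.left, congrArg CommaMorphism.left hk⟩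

theorem InjectiveInE.injective_left (hM : InjectiveInE T M) : Injective M.left := by
  refine ⟨fun {U V} u f _ => ?_⟩
  obtain ⟨k, hk⟩ := hM.exists_extend (ofLeftMap T f) (ofLeft_mem T V)
    (.of_vert_isIso ⟨by simp⟩) ⟨u, T.map u ≫ M.hom, by simp⟩
  exact ⟨k.left, congrArg CommaMorphism.left hk⟩

theorem projectiveInE_iff :
    ProjectiveInE T M ↔ M ∈ E T ∧ Projective M.left ∧ Projective (cokernel M.hom) :=
  ⟨fun hM => ⟨hM.1, hM.projective_left, hM.projective_cokernel⟩,
    fun ⟨hM, _, _⟩ => projectiveInE_of_projective hM⟩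

theorem injectiveInE_iff :
    InjectiveInE T M ↔ M ∈ E T ∧ Injective M.left ∧ Injective M.right :=
  ⟨fun hM => ⟨hM.1, hM.injective_left, hM.injective_right⟩,
    fun ⟨hM, _, _⟩ => injectiveInE_of_injective hM⟩

theorem injectiveInE_ofRight_iff (R : A) : InjectiveInE T (ofRight T R) ↔ Injective R :=
  ⟨InjectiveInE.injective_right, fun _ => injectiveInE_of_injective (ofRight_mem T R)⟩

theorem projectiveInE_ofLeft_iff (Q : B) : ProjectiveInE T (ofLeft T Q) ↔ Projective Q := by
  refine ⟨ProjectiveInE.projective_left, fun _ => ?_⟩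
  have : Projective (cokernel (ofLeft T Q).hom) :=
    Projective.of_iso (cokernel.ofEpi (𝟙 (T.obj Q))).symm inferInstance
  exact projectiveInE_of_projective (ofLeft_mem T Q)

theorem enoughInjectivesInE [EnoughInjectives A] [EnoughInjectives B] :
    EnoughInjectivesInE T := by
  intro X hX
  have : Mono X.hom := hX
  let ι := Injective.ι X.left
  let P := pushout X.hom (T.map ι)
  let Y : Comma T (𝟭 A) := ⟨Injective.under X.left, Injective.under P,
    pushout.inr X.hom (T.map ι) ≫ Injective.ι P⟩
  let f : X ⟶ Y := ⟨ι, pushout.inl _ _ ≫ Injective.ι P, by simp [Y, pushout.condition_assoc]⟩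
  have hY : Y ∈ E T := inferInstanceAs (Mono (_ ≫ _))
  have : Mono f.right := inferInstanceAs (Mono (_ ≫ _))
  -- a pushout along a monomorphism is also a pullback, so the cokernel of `f` lies in `E`
  have sq : IsPullback (T.map f.left) X.hom Y.hom f.right :=
    (IsPushout.of_hasPushout X.hom (T.map ι)).flip.isPullback_of_mono_left.comp_mono _
  exact ⟨Y, _, f, cokernelCommaπ T f, hY, cokernelComma_mem T f sq, isSES_cokernelCommaπ T f,
    injectiveInE_of_injective hY⟩

end CommaFrobenius

open CommaFrobenius

/-- An abelian category is Frobenius if its projective and injective objects coincide. -/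
def FrobeniusAbelian (C : Type*) [Category C] [Abelian C] : Prop :=
  ∀ X : C, Projective X ↔ Injective X

theorem comma_frobenius_iff
    [EnoughProjectives A] [EnoughInjectives A] [EnoughProjectives B] [EnoughInjectives B]
    [PreservesFiniteLimits T] [PreservesFiniteColimits T] :
    FrobeniusE T ↔
      (FrobeniusAbelian A ∧ FrobeniusAbelian B ∧
        ∀ Q : B, Projective Q → Projective (T.obj Q)) := by
  constructor
  · rintro ⟨-, -, hPI⟩
    have hA : FrobeniusAbelian A := fun R =>
      (projectiveInE_ofRight_iff R).symm.trans ((hPI _).trans (injectiveInE_ofRight_iff R))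
    have hinj (Q : B) (hQ : Projective Q) : Injective Q ∧ Injective (T.obj Q) :=
      (injectiveInE_iff.1 ((hPI _).1 ((projectiveInE_ofLeft_iff Q).2 hQ))).2
    refine ⟨hA, fun Q => ⟨fun hQ => (hinj Q hQ).1, fun hQ => ?_⟩,
      fun Q hQ => (hA _).2 (hinj Q hQ).2⟩
    let M : Comma T (𝟭 A) := ⟨Q, Injective.under (T.obj Q), Injective.ι _⟩
    have hM : M ∈ E T := inferInstanceAs (Mono (Injective.ι _))
    exact (projectiveInE_iff.1 ((hPI M).2 (injectiveInE_iff.2 ⟨hM, hQ, inferInstance⟩))).2.1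
  · rintro ⟨hA, hB, hT⟩
    refine ⟨enoughProjectivesInE, enoughInjectivesInE, fun M => ?_⟩
    rw [projectiveInE_iff, injectiveInE_iff]
    refine ⟨fun ⟨hM, hl, _⟩ => ?_, fun ⟨hM, hl, hr⟩ => ?_⟩
    · have : Mono M.hom := hM
      have := hT _ hl
      exact ⟨hM, (hB _).1 hl, (hA _).1 (cokernel_shortExact M.hom).projective_X₂⟩
    · have : Mono M.hom := hM
      have : Injective (T.obj M.left) := (hA _).1 (hT _ ((hB _).2 hl))
      have : Projective M.right := (hA _).2 hr
      exact ⟨hM, (hB _).2 hl, (cokernel_shortExact M.hom).projective_X₃_of_injective_X₁⟩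
end
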